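/- arXiv:1801.00802 — 2 statements merged into one kernel-verified Lean document; each statement's English description precedes it below -/
import Mathlib

section
/- Under ignorability Y(a) ⫫ A | (X, U) and overlap 0 < c₁ ≤ e(X,U) ≤ c₂ < 1, for any (possibly misspecified) measurable bounded functions m₀(X,U), m₁(X,U) and ẽ(X,U) with values in [c₁, c₂]: if either (i) ẽ = e almost surely, or (ii) mₐ(X,U) = E(Y | A = a, X, U) almost surely for a = 0,1, then E[ A(Y - m₁(X,U))/ẽ(X,U) + m₁(X,U) - (1-A)(Y - m₀(X,U))/(1-ẽ(X,U)) - m₀(X,U) ] = E[Y(1) - Y(0)]. -/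
/-!
Conditional independence of `Y` and `A` given `W = (X, U)` factorises the conditional mean of the
weighted residual: `E[A (Y - k(W)) | W] = e(W) (E[Y | W] - k(W))`. Pulling the `W`-measurable
weight `1 / h(W)` out of the expectation, the treated arm `E[A (Y - m₁)/ẽ + m₁]` equals `E[Y(1)]`
either because `ẽ = e` cancels the factor `e(W)`, or because a vanishing residual forces
`E[Y(1) | W] = m₁(W)` wherever `e(W) ≠ 0`. The control arm is the same argument for `1 - A`.
-/

open MeasureTheory ProbabilityTheory

section

variable {Ω : Type*} {m' mΩ : MeasurableSpace Ω} {μ : Measure Ω} [IsFiniteMeasure μ]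

theorem ProbabilityTheory.CondIndepFun.condExp_mul_ae_eq [StandardBorelSpace Ω]
    {hm' : m' ≤ mΩ} {f g : Ω → ℝ} (hf : Measurable f) (hg : Measurable g)
    (hfi : Integrable f μ) (hgi : Integrable g μ) (hfgi : Integrable (f * g) μ)
    (h : CondIndepFun m' hm' f g μ) :
    μ[f * g | m'] =ᵐ[μ] μ[f | m'] * μ[g | m'] := by
  have h_indep : ∀ᵐ ω ∂μ, IndepFun f g (condExpKernel μ m' ω) := by
    have := (condIndepFun_iff_map_prod_eq_prod_map_map hf hg).mp h
    filter_upwards [ae_of_ae_trim hm' this] with ω hω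
    rw [indepFun_iff_map_prod_eq_prod_map_map hf.aemeasurable hg.aemeasurable]
    simpa only [Kernel.prod_apply, Kernel.map_apply _ hf, Kernel.map_apply _ hg,
      Kernel.map_apply _ (hf.prodMk hg)] using hω
  filter_upwards [h_indep, condExp_ae_eq_integral_condExpKernel hm' hfgi,
    condExp_ae_eq_integral_condExpKernel hm' hfi,
    condExp_ae_eq_integral_condExpKernel hm' hgi] with ω hω hfg hf' hg'
  rw [hfg, Pi.mul_apply, hf', hg']
  exact hω.integral_mul_eq_mul_integral hf.aestronglyMeasurable hg.aestronglyMeasurable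

theorem integral_mul_condExp_of_bound (hm' : m' ≤ mΩ) {w φ : Ω → ℝ} {C : ℝ}
    (hw : StronglyMeasurable[m'] w) (hw_bdd : ∀ ω, ‖w ω‖ ≤ C) (hφ : Integrable φ μ) :
    ∫ ω, w ω * (μ[φ | m']) ω ∂μ = ∫ ω, w ω * φ ω ∂μ := by
  conv_rhs => rw [← integral_condExp hm']
  exact integral_congr_ae (condExp_stronglyMeasurable_mul_of_bound hm' hw hφ C
    (ae_of_all _ hw_bdd)).symm

theorem condExp_one_sub_ae_eq (hm' : m' ≤ mΩ) {A : Ω → ℝ} (hA : Integrable A μ) :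
    μ[fun ω => 1 - A ω | m'] =ᵐ[μ] fun ω => 1 - μ[A | m'] ω := by
  filter_upwards [condExp_sub (integrable_const 1) hA m'] with ω h_sub
  exact h_sub.trans (by rw [Pi.sub_apply, condExp_const hm'])

variable {Y A k h g : Ω → ℝ} {B C c : ℝ}

theorem integrable_mul_sub_div (hYi : Integrable Y μ)
    (hA : Measurable A) (hA_bdd : ∀ ω, ‖A ω‖ ≤ C)
    (hk : Measurable k) (hk_bdd : ∀ ω, ‖k ω‖ ≤ B)
    (hh : Measurable h) (hc : 0 < c) (hh_ge : ∀ ω, c ≤ h ω) :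
    Integrable (fun ω => A ω * (Y ω - k ω) / h ω) μ := by
  have hki : Integrable k μ := .of_bound hk.aestronglyMeasurable B (ae_of_all _ hk_bdd)
  have h_weight (ω : Ω) : ‖A ω / h ω‖ ≤ C * c⁻¹ := by
    have hpos : 0 < h ω := hc.trans_le (hh_ge ω)
    rw [norm_div, Real.norm_of_nonneg hpos.le, div_eq_mul_inv]
    exact mul_le_mul (hA_bdd ω) (inv_anti₀ hc (hh_ge ω)) (inv_nonneg.2 hpos.le)
      ((norm_nonneg _).trans (hA_bdd ω))
  refine ((hYi.sub hki).bdd_mul (hA.div hh).aestronglyMeasurable (ae_of_all _ h_weight)).congr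
    (ae_of_all _ fun ω => ?_)
  simp only [Pi.sub_apply, Pi.div_apply]
  ring

theorem condExp_mul_sub_ae_eq [StandardBorelSpace Ω] (hm' : m' ≤ mΩ)
    (hY : Measurable Y) (hYi : Integrable Y μ) (hA : Measurable A) (hA_bdd : ∀ ω, ‖A ω‖ ≤ C)
    (hind : CondIndepFun m' hm' Y A μ)
    (hk : StronglyMeasurable[m'] k) (hk_bdd : ∀ ω, ‖k ω‖ ≤ B) :
    μ[fun ω => A ω * (Y ω - k ω) | m'] =ᵐ[μ] fun ω => μ[A | m'] ω * (μ[Y | m'] ω - k ω) := by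
  have hAi : Integrable A μ := .of_bound hA.aestronglyMeasurable C (ae_of_all _ hA_bdd)
  have hAYi : Integrable (A * Y) μ := hYi.bdd_mul hA.aestronglyMeasurable (ae_of_all _ hA_bdd)
  have hkAi : Integrable (k * A) μ :=
    hAi.bdd_mul (hk.mono hm').aestronglyMeasurable (ae_of_all _ hk_bdd)
  have h_expand : (fun ω => A ω * (Y ω - k ω)) = A * Y - k * A := by
    ext ω
    simp only [Pi.sub_apply, Pi.mul_apply]
    ring
  rw [h_expand]
  filter_upwards [condExp_sub hAYi hkAi m', hind.symm.condExp_mul_ae_eq hA hY hAi hYi hAYi,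
    condExp_stronglyMeasurable_mul_of_bound hm' hk hAi B (ae_of_all _ hk_bdd)]
    with ω h_sub h_AY h_kA
  rw [h_sub, Pi.sub_apply, h_AY, h_kA]
  simp only [Pi.mul_apply]
  ring

theorem mul_observed_sub {a : ℝ} (ha : a = 0 ∨ a = 1) (y₀ y₁ m : ℝ) :
    a * (a * y₁ + (1 - a) * y₀ - m) = a * (y₁ - m) := by
  rcases ha with rfl | rfl <;> ring

theorem one_sub_mul_observed_sub {a : ℝ} (ha : a = 0 ∨ a = 1) (y₀ y₁ m : ℝ) :
    (1 - a) * (a * y₁ + (1 - a) * y₀ - m) = (1 - a) * (y₀ - m) := by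
  rcases ha with rfl | rfl <;> ring

/-- One arm of the AIPW functional: `A` is the indicator of the arm, `Y` its potential outcome,
`k` the working outcome regression and `h` the working propensity score. -/
noncomputable def aipwArm (A Y k h : Ω → ℝ) (ω : Ω) : ℝ := A ω * (Y ω - k ω) / h ω + k ω

theorem integrable_aipwArm (hYi : Integrable Y μ)
    (hA : Measurable A) (hA_bdd : ∀ ω, ‖A ω‖ ≤ C)
    (hk : Measurable k) (hk_bdd : ∀ ω, ‖k ω‖ ≤ B)
    (hh : Measurable h) (hc : 0 < c) (hh_ge : ∀ ω, c ≤ h ω) :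
    Integrable (aipwArm A Y k h) μ :=
  (integrable_mul_sub_div hYi hA hA_bdd hk hk_bdd hh hc hh_ge).add
    (.of_bound hk.aestronglyMeasurable B (ae_of_all _ hk_bdd))

theorem integral_aipwArm [StandardBorelSpace Ω] (hm' : m' ≤ mΩ)
    (hY : Measurable Y) (hYi : Integrable Y μ) (hA : Measurable A) (hA_bdd : ∀ ω, ‖A ω‖ ≤ C)
    (hind : CondIndepFun m' hm' Y A μ)
    (hk : StronglyMeasurable[m'] k) (hk_bdd : ∀ ω, ‖k ω‖ ≤ B)
    (hh : StronglyMeasurable[m'] h) (hc : 0 < c) (hh_ge : ∀ ω, c ≤ h ω)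
    (hg : μ[A | m'] =ᵐ[μ] g) (hg_ne : ∀ᵐ ω ∂μ, g ω ≠ 0)
    (h_robust : h =ᵐ[μ] g ∨ μ[fun ω => A ω * (Y ω - k ω) | m'] =ᵐ[μ] 0) :
    ∫ ω, aipwArm A Y k h ω ∂μ = ∫ ω, Y ω ∂μ := by
  have hki : Integrable k μ := .of_bound (hk.mono hm').aestronglyMeasurable B (ae_of_all _ hk_bdd)
  have h_inv_bdd (ω : Ω) : ‖(h ω)⁻¹‖ ≤ c⁻¹ := by
    rw [norm_inv, Real.norm_of_nonneg (hc.le.trans (hh_ge ω))]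
    exact inv_anti₀ hc (hh_ge ω)
  have h_tower : ∫ ω, A ω * (Y ω - k ω) / h ω ∂μ =
      ∫ ω, (h ω)⁻¹ * (μ[fun ω => A ω * (Y ω - k ω) | m']) ω ∂μ := by
    rw [integral_mul_condExp_of_bound (w := fun ω => (h ω)⁻¹) (φ := fun ω => A ω * (Y ω - k ω))
      hm' hh.measurable.inv.stronglyMeasurable h_inv_bdd
      ((hYi.sub hki).bdd_mul hA.aestronglyMeasurable (ae_of_all _ hA_bdd))]
    simp only [div_eq_inv_mul]
  have h_res := condExp_mul_sub_ae_eq hm' hY hYi hA hA_bdd hind hk hk_bdd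
  unfold aipwArm
  rw [integral_add (integrable_mul_sub_div hYi hA hA_bdd (hk.mono hm').measurable hk_bdd
    (hh.mono hm').measurable hc hh_ge) hki, h_tower, ← eq_sub_iff_add_eq]
  rcases h_robust with h_prop | h_out
  · calc ∫ ω, (h ω)⁻¹ * (μ[fun ω => A ω * (Y ω - k ω) | m']) ω ∂μ
      _ = ∫ ω, μ[Y | m'] ω - k ω ∂μ := by
          refine integral_congr_ae ?_
          filter_upwards [h_res, h_prop, hg] with ω h_res h_prop hg
          have : h ω ≠ 0 := (hc.trans_le (hh_ge ω)).ne'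
          rw [h_res, hg, ← h_prop]
          field_simp
      _ = ∫ ω, Y ω ∂μ - ∫ ω, k ω ∂μ := by
          rw [integral_sub integrable_condExp hki, integral_condExp hm']
  · have h_reg : μ[Y | m'] =ᵐ[μ] k := by
      filter_upwards [h_res, h_out, hg, hg_ne] with ω h_res h_out hg hg_ne
      rw [h_out, Pi.zero_apply, hg] at h_res
      exact sub_eq_zero.1 ((mul_eq_zero.1 h_res.symm).resolve_left hg_ne)
    rw [← integral_condExp (f := Y) hm', integral_congr_ae h_reg, sub_self]
    refine integral_eq_zero_of_ae ?_
    filter_upwards [h_out] with ω h_out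
    simp [h_out]

theorem integrable_and_integral_aipwArm_comp [StandardBorelSpace Ω] {β : Type*}
    [MeasurableSpace β] {W : Ω → β} (hW : Measurable W) (hY : Measurable Y) (hYi : Integrable Y μ)
    (hA : Measurable A) (hA_bdd : ∀ ω, ‖A ω‖ ≤ C)
    (hind : CondIndepFun (MeasurableSpace.comap W inferInstance) hW.comap_le Y A μ)
    {k h : β → ℝ} (hk : Measurable k) (hk_bdd : ∀ x, ‖k x‖ ≤ B)
    (hh : Measurable h) (hc : 0 < c) (hh_ge : ∀ x, c ≤ h x)
    (hg : μ[A | MeasurableSpace.comap W inferInstance] =ᵐ[μ] g) (hg_ne : ∀ᵐ ω ∂μ, g ω ≠ 0)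
    (h_robust : (fun ω => h (W ω)) =ᵐ[μ] g ∨
      μ[fun ω => A ω * (Y ω - k (W ω)) | MeasurableSpace.comap W inferInstance] =ᵐ[μ] 0) :
    Integrable (aipwArm A Y (fun ω => k (W ω)) (fun ω => h (W ω))) μ ∧
      ∫ ω, aipwArm A Y (fun ω => k (W ω)) (fun ω => h (W ω)) ω ∂μ = ∫ ω, Y ω ∂μ :=
  ⟨integrable_aipwArm hYi hA hA_bdd (hk.comp hW) (fun _ => hk_bdd _) (hh.comp hW) hc
      (fun _ => hh_ge _),
    integral_aipwArm hW.comap_le hY hYi hA hA_bdd hind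
      (hk.comp (comap_measurable W)).stronglyMeasurable (fun _ => hk_bdd _)
      (hh.comp (comap_measurable W)).stronglyMeasurable hc (fun _ => hh_ge _) hg hg_ne h_robust⟩

end

theorem stmt11_general {Ω : Type*} [MeasurableSpace Ω] [StandardBorelSpace Ω]
    (μ : Measure Ω) [IsProbabilityMeasure μ]
    {p q : ℕ} (A Y0 Y1 : Ω → ℝ) (X : Ω → Fin p → ℝ) (U : Ω → Fin q → ℝ)
    (hA : Measurable A) (hY0 : Measurable Y0) (hY1 : Measurable Y1)
    (hX : Measurable X) (hU : Measurable U)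
    (hA01 : ∀ ω, A ω = 0 ∨ A ω = 1)
    (hint0 : Integrable Y0 μ) (hint1 : Integrable Y1 μ)
    (e m₀ m₁ et : (Fin p → ℝ) × (Fin q → ℝ) → ℝ)
    (hm₀ : Measurable m₀) (hm₁ : Measurable m₁)
    (het : Measurable et)
    (c₁ c₂ : ℝ) (hc₁ : 0 < c₁) (hc₂ : c₂ < 1)
    (hov : ∀ ω, c₁ ≤ e (X ω, U ω) ∧ e (X ω, U ω) ≤ c₂)
    (hetbd : ∀ x, c₁ ≤ et x ∧ et x ≤ c₂)
    (hmbd : ∃ B : ℝ, ∀ x, |m₀ x| ≤ B ∧ |m₁ x| ≤ B)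
    (he : (μ[A | MeasurableSpace.comap (fun ω => (X ω, U ω)) inferInstance])
      =ᵐ[μ] fun ω => e (X ω, U ω))
    (hig0 : CondIndepFun
      (MeasurableSpace.comap (fun ω => (X ω, U ω)) inferInstance)
      ((hX.prodMk hU).comap_le) Y0 A μ)
    (hig1 : CondIndepFun
      (MeasurableSpace.comap (fun ω => (X ω, U ω)) inferInstance)
      ((hX.prodMk hU).comap_le) Y1 A μ)
    (hdr :
      ((fun ω => et (X ω, U ω)) =ᵐ[μ] fun ω => e (X ω, U ω)) ∨
      (((μ[fun ω => A ω * ((A ω * Y1 ω + (1 - A ω) * Y0 ω) - m₁ (X ω, U ω)) |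
            MeasurableSpace.comap (fun ω => (X ω, U ω)) inferInstance])
          =ᵐ[μ] 0) ∧
        ((μ[fun ω => (1 - A ω) * ((A ω * Y1 ω + (1 - A ω) * Y0 ω) - m₀ (X ω, U ω)) |
            MeasurableSpace.comap (fun ω => (X ω, U ω)) inferInstance])
          =ᵐ[μ] 0))) :
    ∫ ω, A ω * ((A ω * Y1 ω + (1 - A ω) * Y0 ω) - m₁ (X ω, U ω)) / et (X ω, U ω)
        + m₁ (X ω, U ω)
        - (1 - A ω) * ((A ω * Y1 ω + (1 - A ω) * Y0 ω) - m₀ (X ω, U ω)) /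
            (1 - et (X ω, U ω))
        - m₀ (X ω, U ω) ∂μ =
      ∫ ω, Y1 ω - Y0 ω ∂μ := by
  obtain ⟨B, hB⟩ := hmbd
  have hW := hX.prodMk hU
  have hA_bdd (ω : Ω) : ‖A ω‖ ≤ 1 := by rcases hA01 ω with h | h <;> simp [h]
  have hA'_bdd (ω : Ω) : ‖1 - A ω‖ ≤ 1 := by rcases hA01 ω with h | h <;> simp [h]
  have he' := (condExp_one_sub_ae_eq hW.comap_le
    (.of_bound hA.aestronglyMeasurable 1 (ae_of_all μ hA_bdd))).trans (he.fun_comp (1 - ·))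
  obtain ⟨h_int1, h_arm1⟩ := integrable_and_integral_aipwArm_comp hW hY1 hint1 hA hA_bdd hig1
    hm₁ (fun x => (hB x).2) het hc₁ (fun x => (hetbd x).1) he
    (ae_of_all μ fun ω => (hc₁.trans_le (hov ω).1).ne')
    (hdr.imp id fun h => by simpa only [mul_observed_sub (hA01 _)] using h.1)
  obtain ⟨h_int0, h_arm0⟩ := integrable_and_integral_aipwArm_comp (A := fun ω => 1 - A ω)
    (h := fun x => 1 - et x) hW hY0 hint0 (measurable_const.sub hA) hA'_bdd
    (hig0.comp measurable_id (measurable_const.sub measurable_id))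
    hm₀ (fun x => (hB x).1) (measurable_const.sub het) (sub_pos.2 hc₂)
    (fun x => sub_le_sub_left (hetbd x).2 1) he'
    (ae_of_all μ fun ω => (sub_pos.2 ((hov ω).2.trans_lt hc₂)).ne')
    (hdr.imp (·.fun_comp (1 - ·)) fun h => by
      simpa only [one_sub_mul_observed_sub (hA01 _)] using h.2)
  calc _ = ∫ ω, aipwArm A Y1 (fun ω => m₁ (X ω, U ω)) (fun ω => et (X ω, U ω)) ω
        - aipwArm (fun ω => 1 - A ω) Y0 (fun ω => m₀ (X ω, U ω))
            (fun ω => 1 - et (X ω, U ω)) ω ∂μ := by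
        refine integral_congr_ae (ae_of_all μ fun ω => ?_)
        simp only [aipwArm, mul_observed_sub (hA01 ω), one_sub_mul_observed_sub (hA01 ω)]
        ring
    _ = ∫ ω, Y1 ω - Y0 ω ∂μ := by
      rw [integral_sub h_int1 h_int0, h_arm1, h_arm0, integral_sub hint1 hint0]

/-- Double robustness of the AIPW estimand: under ignorability and overlap,
if either the working propensity score `et` equals the true one `e` a.s., or
the working outcome regressions `m₀, m₁` are correct (expressed as
`E[A (Y - m₁(X,U)) | X, U] = 0` and `E[(1-A)(Y - m₀(X,U)) | X, U] = 0` a.s.),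
then the AIPW functional recovers `E[Y(1) - Y(0)]`. -/
theorem stmt11 {Ω : Type*} [MeasurableSpace Ω] [StandardBorelSpace Ω]
    (μ : Measure Ω) [IsProbabilityMeasure μ]
    {p q : ℕ} (A Y0 Y1 : Ω → ℝ) (X : Ω → Fin p → ℝ) (U : Ω → Fin q → ℝ)
    (hA : Measurable A) (hY0 : Measurable Y0) (hY1 : Measurable Y1)
    (hX : Measurable X) (hU : Measurable U)
    (hA01 : ∀ ω, A ω = 0 ∨ A ω = 1)
    (hint0 : Integrable Y0 μ) (hint1 : Integrable Y1 μ)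
    (e m₀ m₁ et : (Fin p → ℝ) × (Fin q → ℝ) → ℝ)
    (hem : Measurable e) (hm₀ : Measurable m₀) (hm₁ : Measurable m₁)
    (het : Measurable et)
    (c₁ c₂ : ℝ) (hc₁ : 0 < c₁) (hc₂ : c₂ < 1)
    (hov : ∀ ω, c₁ ≤ e (X ω, U ω) ∧ e (X ω, U ω) ≤ c₂)
    (hetbd : ∀ x, c₁ ≤ et x ∧ et x ≤ c₂)
    (hmbd : ∃ B : ℝ, ∀ x, |m₀ x| ≤ B ∧ |m₁ x| ≤ B)
    (he : (μ[A | MeasurableSpace.comap (fun ω => (X ω, U ω)) inferInstance])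
      =ᵐ[μ] fun ω => e (X ω, U ω))
    (hig0 : CondIndepFun
      (MeasurableSpace.comap (fun ω => (X ω, U ω)) inferInstance)
      ((hX.prodMk hU).comap_le) Y0 A μ)
    (hig1 : CondIndepFun
      (MeasurableSpace.comap (fun ω => (X ω, U ω)) inferInstance)
      ((hX.prodMk hU).comap_le) Y1 A μ)
    (hdr :
      ((fun ω => et (X ω, U ω)) =ᵐ[μ] fun ω => e (X ω, U ω)) ∨
      (((μ[fun ω => A ω * ((A ω * Y1 ω + (1 - A ω) * Y0 ω) - m₁ (X ω, U ω)) |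
            MeasurableSpace.comap (fun ω => (X ω, U ω)) inferInstance])
          =ᵐ[μ] 0) ∧
        ((μ[fun ω => (1 - A ω) * ((A ω * Y1 ω + (1 - A ω) * Y0 ω) - m₀ (X ω, U ω)) |
            MeasurableSpace.comap (fun ω => (X ω, U ω)) inferInstance])
          =ᵐ[μ] 0))) :
    ∫ ω, A ω * ((A ω * Y1 ω + (1 - A ω) * Y0 ω) - m₁ (X ω, U ω)) / et (X ω, U ω)
        + m₁ (X ω, U ω)
        - (1 - A ω) * ((A ω * Y1 ω + (1 - A ω) * Y0 ω) - m₀ (X ω, U ω)) /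
            (1 - et (X ω, U ω))
        - m₀ (X ω, U ω) ∂μ =
      ∫ ω, Y1 ω - Y0 ω ∂μ :=
  stmt11_general μ A Y0 Y1 X U hA hY0 hY1 hX hU hA01 hint0 hint1 e m₀ m₁ et hm₀ hm₁ het c₁ c₂ hc₁
    hc₂ hov hetbd hmbd he hig0 hig1 hdr
end

section
/- Let X be a square-integrable random variable and Z a square-integrable random vector. Among all square-integrable functions κ_opt minimizing the variance of (I/π)·s(W) - (I/π - 1)·κ(V) over measurable square-integrable κ, where W = (A,X,U,Y), V = (A,X,Y), π = E(I | W) = π(V) is bounded away from 0, I is Bernoulli given W, and E[s(W)] = 0, the optimal choice is κ_opt(V) = E[s(W) | V]. -/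
/-!
Write `R = I / π(V)`. Since `E[I | W] = π(V)`, `E[R g(W)] = E[g(W)]` for every integrable `g`, and
`F_κ = F_opt + (R - 1)(κ_opt - κ)`. Because `I² = I`, `R (R - 1) = (1/π - 1) R`, so conditioning
first on `W` and then on `V` shows that `F_opt` is uncorrelated with `(R - 1) g(V)` for every
square-integrable `g`; hence `Var F_κ = Var F_opt + Var((R - 1)(κ_opt - κ)) ≥ Var F_opt`.
-/

open MeasureTheory ProbabilityTheory
open scoped ENNReal

noncomputable def aipw {Ω : Type*} (P I S K : Ω → ℝ) (ω : Ω) : ℝ :=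
  (P ω)⁻¹ * I ω * S ω - ((P ω)⁻¹ * I ω - 1) * K ω

section

variable {Ω : Type*} {m0 : MeasurableSpace Ω} {μ : Measure Ω}

lemma integral_mul_condExp_of_stronglyMeasurable [IsFiniteMeasure μ] {m : MeasurableSpace Ω}
    (hm : m ≤ m0) {f g : Ω → ℝ} (hg : StronglyMeasurable[m] g) (hf : Integrable f μ)
    (hgf : Integrable (fun ω => g ω * f ω) μ) :
    ∫ ω, g ω * (μ[f|m]) ω ∂μ = ∫ ω, g ω * f ω ∂μ :=
  calc ∫ ω, g ω * (μ[f|m]) ω ∂μ = ∫ ω, (μ[fun ω => g ω * f ω|m]) ω ∂μ :=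
        integral_congr_ae (condExp_mul_of_stronglyMeasurable_left hg hgf hf).symm
    _ = ∫ ω, g ω * f ω ∂μ := integral_condExp hm

lemma integral_mul_sub_condExp_eq_zero [IsFiniteMeasure μ] {m : MeasurableSpace Ω} (hm : m ≤ m0)
    {f g : Ω → ℝ} (hg : StronglyMeasurable[m] g) (hg2 : MemLp g 2 μ) (hf2 : MemLp f 2 μ) :
    ∫ ω, g ω * (f ω - (μ[f|m]) ω) ∂μ = 0 := by
  have hgf : Integrable (fun ω => g ω * f ω) μ := hg2.integrable_mul hf2
  have hgm : Integrable (fun ω => g ω * (μ[f|m]) ω) μ :=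
    hg2.integrable_mul (hf2.condExp one_le_two)
  simp_rw [mul_sub]
  rw [integral_sub hgf hgm, integral_mul_condExp_of_stronglyMeasurable hm hg
    (hf2.integrable one_le_two) hgf, sub_self]

lemma variance_le_variance_add_of_covariance_eq_zero [IsFiniteMeasure μ] {X D : Ω → ℝ}
    (hX : MemLp X 2 μ) (hD : MemLp D 2 μ) (h : cov[X, D; μ] = 0) :
    Var[X; μ] ≤ Var[X + D; μ] := by
  rw [variance_add hX hD, h]
  linarith [variance_nonneg D μ]

lemma memLp_top_inv_of_le {P : Ω → ℝ} {c : ℝ} (hP : AEStronglyMeasurable P μ) (hc : 0 < c)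
    (hcP : ∀ᵐ ω ∂μ, c ≤ P ω) : MemLp (fun ω => (P ω)⁻¹) ∞ μ := by
  refine memLp_top_of_bound hP.aemeasurable.inv.aestronglyMeasurable c⁻¹ (hcP.mono fun ω h => ?_)
  rw [norm_inv, Real.norm_of_nonneg (hc.le.trans h)]
  exact inv_anti₀ hc h

lemma aipw_eq_add (P I S K K' : Ω → ℝ) :
    aipw P I S K' = aipw P I S K + fun ω => ((P ω)⁻¹ * I ω - 1) * (K ω - K' ω) := by
  funext ω
  simp only [aipw, Pi.add_apply]
  ring

lemma memLp_aipw {P I S K : Ω → ℝ} (hI : MemLp I ∞ μ) (hPinv : MemLp (fun ω => (P ω)⁻¹) ∞ μ)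
    (hS : MemLp S 2 μ) (hK : MemLp K 2 μ) : MemLp (aipw P I S K) 2 μ :=
  have hR : MemLp (fun ω => (P ω)⁻¹ * I ω) ∞ μ := hI.mul' hPinv
  (hS.mul' hR).sub (hK.mul' (hR.sub (memLp_top_const 1)))

section InverseProbabilityWeighting

variable {𝒱 𝒲 : MeasurableSpace Ω} {I P : Ω → ℝ} {c : ℝ}

lemma integral_inv_mul_mul_eq_integral_of_condExp_eq [IsFiniteMeasure μ]
    (h𝒲 : 𝒲 ≤ m0) (hI : MemLp I ∞ μ) (hP : StronglyMeasurable[𝒲] P) (hc : 0 < c)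
    (hcP : ∀ᵐ ω ∂μ, c ≤ P ω) (hIP : μ[I|𝒲] =ᵐ[μ] P) {g : Ω → ℝ} (hg : StronglyMeasurable[𝒲] g)
    (hgi : Integrable g μ) :
    ∫ ω, (P ω)⁻¹ * I ω * g ω ∂μ = ∫ ω, g ω ∂μ := by
  have hPinv := memLp_top_inv_of_le (hP.mono h𝒲).aestronglyMeasurable hc hcP
  have hPgI : Integrable (fun ω => (P ω)⁻¹ * g ω * I ω) μ :=
    (hgi.mul_of_top_right hPinv).mul_of_top_left hI
  calc ∫ ω, (P ω)⁻¹ * I ω * g ω ∂μ = ∫ ω, (P ω)⁻¹ * g ω * I ω ∂μ := by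
        congr with ω; ring
    _ = ∫ ω, (P ω)⁻¹ * g ω * (μ[I|𝒲]) ω ∂μ :=
        (integral_mul_condExp_of_stronglyMeasurable h𝒲
          (hP.measurable.inv.stronglyMeasurable.mul hg) (hI.integrable le_top) hPgI).symm
    _ = ∫ ω, g ω ∂μ := integral_congr_ae <| (hIP.and hcP).mono fun ω ⟨hω, hcω⟩ => by
        have : P ω ≠ 0 := (hc.trans_le hcω).ne'
        beta_reduce; rw [hω]; field_simp

lemma integral_inv_mul_sub_one_mul_eq_zero_of_condExp_eq [IsFiniteMeasure μ]
    (h𝒲 : 𝒲 ≤ m0) (hI : MemLp I ∞ μ) (hP : StronglyMeasurable[𝒲] P) (hc : 0 < c)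
    (hcP : ∀ᵐ ω ∂μ, c ≤ P ω) (hIP : μ[I|𝒲] =ᵐ[μ] P) {g : Ω → ℝ} (hg : StronglyMeasurable[𝒲] g)
    (hgi : Integrable g μ) :
    ∫ ω, ((P ω)⁻¹ * I ω - 1) * g ω ∂μ = 0 := by
  have hR : MemLp (fun ω => (P ω)⁻¹ * I ω) ∞ μ :=
    hI.mul' (memLp_top_inv_of_le (hP.mono h𝒲).aestronglyMeasurable hc hcP)
  simp_rw [sub_mul, one_mul]
  rw [integral_sub (f := fun ω => (P ω)⁻¹ * I ω * g ω) (hgi.mul_of_top_right hR) hgi,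
    integral_inv_mul_mul_eq_integral_of_condExp_eq h𝒲 hI hP hc hcP hIP hg hgi, sub_self]

lemma covariance_aipw_condExp_eq_zero [IsProbabilityMeasure μ] (h𝒱𝒲 : 𝒱 ≤ 𝒲) (h𝒲 : 𝒲 ≤ m0)
    (hI : MemLp I ∞ μ) (hI01 : ∀ ω, I ω = 0 ∨ I ω = 1) (hP : StronglyMeasurable[𝒱] P)
    (hc : 0 < c) (hcP : ∀ᵐ ω ∂μ, c ≤ P ω) (hIP : μ[I|𝒲] =ᵐ[μ] P) {S G : Ω → ℝ}
    (hS : StronglyMeasurable[𝒲] S) (hS2 : MemLp S 2 μ)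
    (hG : StronglyMeasurable[𝒱] G) (hG2 : MemLp G 2 μ) :
    cov[aipw P I S (μ[S|𝒱]), fun ω => ((P ω)⁻¹ * I ω - 1) * G ω; μ] = 0 := by
  set M := μ[S|𝒱]
  set D : Ω → ℝ := fun ω => ((P ω)⁻¹ * I ω - 1) * G ω
  set ψ : Ω → ℝ := fun ω => ((P ω)⁻¹ - 1) * G ω
  have h𝒱 : 𝒱 ≤ m0 := h𝒱𝒲.trans h𝒲
  have hP𝒲 : StronglyMeasurable[𝒲] P := hP.mono h𝒱𝒲
  have hPinv := memLp_top_inv_of_le (hP.mono h𝒱).aestronglyMeasurable hc hcP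
  have hR : MemLp (fun ω => (P ω)⁻¹ * I ω) ∞ μ := hI.mul' hPinv
  have hM : StronglyMeasurable[𝒱] M := stronglyMeasurable_condExp
  have hM2 : MemLp M 2 μ := hS2.condExp one_le_two
  have hψ : StronglyMeasurable[𝒱] ψ := (hP.measurable.inv.sub_const 1).stronglyMeasurable.mul hG
  have hψ2 : MemLp ψ 2 μ := hG2.mul' (hPinv.sub (memLp_top_const 1))
  have hGM : Integrable (fun ω => G ω * M ω) μ := hG2.integrable_mul hM2
  have hψS : Integrable (fun ω => ψ ω * (S ω - M ω)) μ := hψ2.integrable_mul (hS2.sub hM2)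
  have hprod : aipw P I S M * D = fun ω =>
      ((P ω)⁻¹ * I ω - 1) * (G ω * M ω) + (P ω)⁻¹ * I ω * (ψ ω * (S ω - M ω)) := by
    funext ω
    rcases hI01 ω with h | h <;> simp only [Pi.mul_apply, aipw, D, ψ, h] <;> ring
  have hmean_prod : ∫ ω, (aipw P I S M * D) ω ∂μ = 0 := by
    have hR1 : MemLp (fun ω => (P ω)⁻¹ * I ω - 1) ∞ μ := hR.sub (memLp_top_const 1)
    have hT1 : Integrable (fun ω => ((P ω)⁻¹ * I ω - 1) * (G ω * M ω)) μ :=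
      hGM.mul_of_top_right hR1
    have hT2 : Integrable (fun ω => (P ω)⁻¹ * I ω * (ψ ω * (S ω - M ω))) μ :=
      hψS.mul_of_top_right hR
    simp only [hprod]
    rw [integral_add hT1 hT2,
      integral_inv_mul_sub_one_mul_eq_zero_of_condExp_eq h𝒲 hI hP𝒲 hc hcP hIP
        (g := fun ω => G ω * M ω) ((hG.mul hM).mono h𝒱𝒲) hGM,
      integral_inv_mul_mul_eq_integral_of_condExp_eq h𝒲 hI hP𝒲 hc hcP hIP
        (g := fun ω => ψ ω * (S ω - M ω)) ((hψ.mono h𝒱𝒲).mul (hS.sub (hM.mono h𝒱𝒲))) hψS,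
      integral_mul_sub_condExp_eq_zero h𝒱 hψ hψ2 hS2, add_zero]
  have hmean_aug : ∫ ω, D ω ∂μ = 0 :=
    integral_inv_mul_sub_one_mul_eq_zero_of_condExp_eq h𝒲 hI hP𝒲 hc hcP hIP (hG.mono h𝒱𝒲)
      (hG2.integrable one_le_two)
  have hD2 : MemLp D 2 μ := hG2.mul' (hR.sub (memLp_top_const 1))
  rw [covariance_eq_sub (memLp_aipw hI hPinv hS2 hM2) hD2,
    hmean_prod, hmean_aug, mul_zero, sub_zero]

lemma variance_aipw_condExp_le [IsProbabilityMeasure μ] (h𝒱𝒲 : 𝒱 ≤ 𝒲) (h𝒲 : 𝒲 ≤ m0)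
    (hI : MemLp I ∞ μ) (hI01 : ∀ ω, I ω = 0 ∨ I ω = 1) (hP : StronglyMeasurable[𝒱] P)
    (hc : 0 < c) (hcP : ∀ᵐ ω ∂μ, c ≤ P ω) (hIP : μ[I|𝒲] =ᵐ[μ] P) {S K : Ω → ℝ}
    (hS : StronglyMeasurable[𝒲] S) (hS2 : MemLp S 2 μ)
    (hK : StronglyMeasurable[𝒱] K) (hK2 : MemLp K 2 μ) :
    Var[aipw P I S (μ[S|𝒱]); μ] ≤ Var[aipw P I S K; μ] := by
  have hPinv := memLp_top_inv_of_le (hP.mono (h𝒱𝒲.trans h𝒲)).aestronglyMeasurable hc hcP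
  have hm2 : MemLp (μ[S|𝒱]) 2 μ := hS2.condExp one_le_two
  rw [aipw_eq_add P I S (μ[S|𝒱]) K]
  exact variance_le_variance_add_of_covariance_eq_zero (memLp_aipw hI hPinv hS2 hm2)
    ((hm2.sub hK2).mul' ((hI.mul' hPinv).sub (memLp_top_const 1)))
    (covariance_aipw_condExp_eq_zero h𝒱𝒲 h𝒲 hI hI01 hP hc hcP hIP hS hS2
      (stronglyMeasurable_condExp.sub hK) (hm2.sub hK2))

end InverseProbabilityWeighting

end

theorem stmt16_general {Ω : Type*} [MeasurableSpace Ω]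
    (μ : Measure Ω) [IsProbabilityMeasure μ]
    {p q : ℕ} (A Y : Ω → ℝ) (X : Ω → Fin p → ℝ) (U : Ω → Fin q → ℝ) (I : Ω → ℝ)
    (hA : Measurable A) (hY : Measurable Y) (hX : Measurable X)
    (hU : Measurable U) (hI : Measurable I) (hI01 : ∀ ω, I ω = 0 ∨ I ω = 1)
    (π : ℝ × (Fin p → ℝ) × ℝ → ℝ) (hπm : Measurable π)
    (c : ℝ) (hc : 0 < c)
    (hπbd : ∀ ω, c ≤ π (A ω, X ω, Y ω) ∧ π (A ω, X ω, Y ω) ≤ 1)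
    (hπ : (μ[I | MeasurableSpace.comap
        (fun ω => (A ω, X ω, U ω, Y ω)) inferInstance])
      =ᵐ[μ] fun ω => π (A ω, X ω, Y ω))
    (s : ℝ × (Fin p → ℝ) × (Fin q → ℝ) × ℝ → ℝ) (hsm : Measurable s)
    (hsL2 : MemLp (fun ω => s (A ω, X ω, U ω, Y ω)) 2 μ) :
    ∀ κ : ℝ × (Fin p → ℝ) × ℝ → ℝ, Measurable κ →
      MemLp (fun ω => κ (A ω, X ω, Y ω)) 2 μ →
      variance (fun ω => (π (A ω, X ω, Y ω))⁻¹ * I ω * s (A ω, X ω, U ω, Y ω) -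
          ((π (A ω, X ω, Y ω))⁻¹ * I ω - 1) *
            ((μ[fun ω' => s (A ω', X ω', U ω', Y ω') |
              MeasurableSpace.comap (fun ω' => (A ω', X ω', Y ω')) inferInstance]) ω)) μ ≤
        variance (fun ω => (π (A ω, X ω, Y ω))⁻¹ * I ω * s (A ω, X ω, U ω, Y ω) -
          ((π (A ω, X ω, Y ω))⁻¹ * I ω - 1) * κ (A ω, X ω, Y ω)) μ := by
  intro κ hκ hκ2
  have hW : Measurable fun ω => (A ω, X ω, U ω, Y ω) := by fun_prop
  have hproj : Measurable fun w : ℝ × (Fin p → ℝ) × (Fin q → ℝ) × ℝ => (w.1, w.2.1, w.2.2.2) := by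
    fun_prop
  have hVW : MeasurableSpace.comap (fun ω => (A ω, X ω, Y ω)) inferInstance ≤
      MeasurableSpace.comap (fun ω => (A ω, X ω, U ω, Y ω)) inferInstance :=
    measurable_iff_comap_le.1 (hproj.comp (comap_measurable _))
  have hI_top : MemLp I ∞ μ := memLp_top_of_bound hI.aestronglyMeasurable 1 <|
    ae_of_all _ fun ω => by rcases hI01 ω with h | h <;> simp [h]
  exact variance_aipw_condExp_le hVW hW.comap_le hI_top hI01
    (hπm.comp (comap_measurable _)).stronglyMeasurable hc (ae_of_all _ fun ω => (hπbd ω).1) hπ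
    (hsm.comp (comap_measurable _)).stronglyMeasurable hsL2
    (hκ.comp (comap_measurable _)).stronglyMeasurable hκ2

/-- Optimality of `κ_opt(V) = E[s(W) | V]` (Robins–Rotnitzky–Zhao): in the
class of augmented influence functions `(I/π) s(W) - (I/π - 1) κ(V)` with
`W = (A,X,U,Y)`, `V = (A,X,Y)`, selection indicator `I` with
`E(I | W) = π(V)` bounded away from zero, `I ⫫ U | V`, and `E[s(W)] = 0`,
taking `κ` to be the conditional expectation `E[s(W) | V]` minimizes the
variance. -/
theorem stmt16 {Ω : Type*} [MeasurableSpace Ω] [StandardBorelSpace Ω]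
    (μ : Measure Ω) [IsProbabilityMeasure μ]
    {p q : ℕ} (A Y : Ω → ℝ) (X : Ω → Fin p → ℝ) (U : Ω → Fin q → ℝ) (I : Ω → ℝ)
    (hA : Measurable A) (hY : Measurable Y) (hX : Measurable X)
    (hU : Measurable U) (hI : Measurable I) (hI01 : ∀ ω, I ω = 0 ∨ I ω = 1)
    (π : ℝ × (Fin p → ℝ) × ℝ → ℝ) (hπm : Measurable π)
    (c : ℝ) (hc : 0 < c)
    (hπbd : ∀ ω, c ≤ π (A ω, X ω, Y ω) ∧ π (A ω, X ω, Y ω) ≤ 1)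
    (hπ : (μ[I | MeasurableSpace.comap
        (fun ω => (A ω, X ω, U ω, Y ω)) inferInstance])
      =ᵐ[μ] fun ω => π (A ω, X ω, Y ω))
    (hCI : CondIndepFun
      (MeasurableSpace.comap (fun ω => (A ω, X ω, Y ω)) inferInstance)
      ((hA.prodMk (hX.prodMk hY)).comap_le) I U μ)
    (s : ℝ × (Fin p → ℝ) × (Fin q → ℝ) × ℝ → ℝ) (hsm : Measurable s)
    (hsL2 : MemLp (fun ω => s (A ω, X ω, U ω, Y ω)) 2 μ)
    (hs0 : ∫ ω, s (A ω, X ω, U ω, Y ω) ∂μ = 0) :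
    ∀ κ : ℝ × (Fin p → ℝ) × ℝ → ℝ, Measurable κ →
      MemLp (fun ω => κ (A ω, X ω, Y ω)) 2 μ →
      variance (fun ω => (π (A ω, X ω, Y ω))⁻¹ * I ω * s (A ω, X ω, U ω, Y ω) -
          ((π (A ω, X ω, Y ω))⁻¹ * I ω - 1) *
            ((μ[fun ω' => s (A ω', X ω', U ω', Y ω') |
              MeasurableSpace.comap (fun ω' => (A ω', X ω', Y ω')) inferInstance]) ω)) μ ≤
        variance (fun ω => (π (A ω, X ω, Y ω))⁻¹ * I ω * s (A ω, X ω, U ω, Y ω) -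
          ((π (A ω, X ω, Y ω))⁻¹ * I ω - 1) * κ (A ω, X ω, Y ω)) μ :=
  stmt16_general μ A Y X U I hA hY hX hU hI hI01 π hπm c hc hπbd hπ s hsm hsL2
end
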